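/- Let ε > 0, μ₀, μ₁ ∈ ℝ and σ₀, σ₁ > 0. Set ρ* = (√(σ₀²σ₁² + ε²/4) - ε/2)/(σ₀σ₁). Then the bivariate Gaussian density with means (μ₀, μ₁), variances σ₀², σ₁² and correlation ρ* is the unique minimizer, over all probability densities q' on ℝ² with marginals equal to the Gaussian densities N(μ₀, σ₀²) and N(μ₁, σ₁²), finite second moments and finite differential entropy, of the functional q' ↦ ∫ (x₀ - x₁)²/(2ε) q'(x₀,x₁) dx₀dx₁ - H(q'). -/

import Mathlib

/-!
Let `q` be the bivariate Gaussian with correlation `ρ*`. Since `ρ*` is the positive root of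
`σ₀σ₁ρ² + ερ - σ₀σ₁ = 0`, i.e. `ρ* ε = σ₀σ₁(1 - ρ*²)`, the cross term of `log q` is the cross
term `x₀x₁/ε` of `-(x₀ - x₁)²/(2ε)` up to separable terms, so
`log q(x) = f(x₀) + g(x₁) - (x₀ - x₁)²/(2ε)` with quadratic potentials `f`, `g`.
Integrating against a density `p` with the same marginals splits the objective as
`∫ f p₀ + ∫ g p₁ + ∫ p log (p / q)`: the first two terms only see the marginals, and the last
is a Kullback–Leibler divergence, positive unless `p = q` a.e. Finite second moments make all
these integrals finite, because `f`, `g`, and the cost grow quadratically.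
-/

open MeasureTheory

/-- The 1D Gaussian density `N(μ, σ²)`. -/
noncomputable def gauss1 (μ σ x : ℝ) : ℝ :=
  (Real.sqrt (2 * Real.pi * σ ^ 2))⁻¹ * Real.exp (-(x - μ) ^ 2 / (2 * σ ^ 2))

/-- The bivariate Gaussian density with means `(μ, μ')`, variances `σ², σ'²` and
correlation `ρ`. -/
noncomputable def biGauss (μ μ' σ σ' ρ : ℝ) (x : ℝ × ℝ) : ℝ :=
  (2 * Real.pi * σ * σ' * Real.sqrt (1 - ρ ^ 2))⁻¹ *
    Real.exp (-((x.1 - μ) ^ 2 / σ ^ 2 - 2 * ρ * (x.1 - μ) * (x.2 - μ') / (σ * σ')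
      + (x.2 - μ') ^ 2 / σ' ^ 2) / (2 * (1 - ρ ^ 2)))

/-- Differential entropy `H(f) = -∫ f log f` of a density on `ℝ²`. -/
noncomputable def diffEntropy2 (f : ℝ × ℝ → ℝ) : ℝ :=
  -∫ x : ℝ × ℝ, f x * Real.log (f x)

open Real

lemma gauss1_eq_gaussianPDFReal (μ σ : ℝ) :
    gauss1 μ σ = ProbabilityTheory.gaussianPDFReal μ ⟨σ ^ 2, sq_nonneg σ⟩ := rfl

lemma integral_gauss1 (μ : ℝ) {σ : ℝ} (hσ : σ ≠ 0) : ∫ x, gauss1 μ σ x = 1 := by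
  rw [gauss1_eq_gaussianPDFReal]
  exact ProbabilityTheory.integral_gaussianPDFReal_eq_one μ fun h =>
    pow_ne_zero 2 hσ (congrArg NNReal.toReal h)

lemma integrable_one_add_sq_mul_exp_neg_mul_sq_sub {b : ℝ} (hb : 0 < b) (m : ℝ) :
    Integrable fun t : ℝ => (1 + t ^ 2) * exp (-b * (t - m) ^ 2) := by
  have hsq : Integrable fun t : ℝ => t ^ 2 * exp (-b * t ^ 2) := by
    simpa only [rpow_two] using integrable_rpow_mul_exp_neg_mul_sq hb (s := 2) (by norm_num)
  have h := (((integrable_exp_neg_mul_sq hb).const_mul (1 + m ^ 2)).add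
    ((integrable_mul_exp_neg_mul_sq hb).const_mul (2 * m))).add hsq
  refine (h.comp_sub_right m).congr (ae_of_all _ fun t => ?_)
  simp only [Pi.add_apply]
  ring_nf

@[fun_prop]
lemma measurable_biGauss (μ₀ μ₁ σ₀ σ₁ ρ : ℝ) : Measurable (biGauss μ₀ μ₁ σ₀ σ₁ ρ) := by
  unfold biGauss
  fun_prop

lemma biGauss_apply_swap (μ₀ μ₁ σ₀ σ₁ ρ : ℝ) (x : ℝ × ℝ) :
    biGauss μ₀ μ₁ σ₀ σ₁ ρ x = biGauss μ₁ μ₀ σ₁ σ₀ ρ x.swap := by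
  unfold biGauss
  simp only [Prod.fst_swap, Prod.snd_swap]
  congr 1 <;> ring_nf

section BivariateGaussian

variable (μ₀ μ₁ : ℝ) {σ₀ σ₁ ρ : ℝ}

lemma biGauss_pos (hσ₀ : 0 < σ₀) (hσ₁ : 0 < σ₁) (hρ : ρ ^ 2 < 1) (x : ℝ × ℝ) :
    0 < biGauss μ₀ μ₁ σ₀ σ₁ ρ x := by
  have : 0 < sqrt (1 - ρ ^ 2) := sqrt_pos.2 (by linarith)
  unfold biGauss
  positivity

lemma log_biGauss (hσ₀ : 0 < σ₀) (hσ₁ : 0 < σ₁) (hρ : ρ ^ 2 < 1) (x : ℝ × ℝ) :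
    log (biGauss μ₀ μ₁ σ₀ σ₁ ρ x) = -log (2 * π * σ₀ * σ₁ * sqrt (1 - ρ ^ 2)) -
      ((x.1 - μ₀) ^ 2 / σ₀ ^ 2 - 2 * ρ * (x.1 - μ₀) * (x.2 - μ₁) / (σ₀ * σ₁)
        + (x.2 - μ₁) ^ 2 / σ₁ ^ 2) / (2 * (1 - ρ ^ 2)) := by
  have : 0 < sqrt (1 - ρ ^ 2) := sqrt_pos.2 (by linarith)
  unfold biGauss
  rw [log_mul (by positivity) (exp_ne_zero _), log_exp, log_inv]
  ring

lemma biGauss_eq_gauss1_mul_gauss1 (hσ₀ : 0 < σ₀) (hσ₁ : 0 < σ₁) (hρ : ρ ^ 2 < 1)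
    (x : ℝ × ℝ) :
    biGauss μ₀ μ₁ σ₀ σ₁ ρ x = gauss1 μ₀ σ₀ x.1 *
      gauss1 (μ₁ + ρ * σ₁ / σ₀ * (x.1 - μ₀)) (σ₁ * sqrt (1 - ρ ^ 2)) x.2 := by
  have h1 : 0 < 1 - ρ ^ 2 := by linarith
  have hr : 0 < sqrt (1 - ρ ^ 2) := sqrt_pos.2 h1
  have hr2 : sqrt (1 - ρ ^ 2) ^ 2 = 1 - ρ ^ 2 := sq_sqrt h1.le
  have h2π : sqrt (2 * π) ^ 2 = 2 * π := sq_sqrt (by positivity)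
  have e₀ : sqrt (2 * π * σ₀ ^ 2) = sqrt (2 * π) * σ₀ := by
    rw [sqrt_mul (by positivity), sqrt_sq hσ₀.le]
  have e₁ : sqrt (2 * π * (σ₁ * sqrt (1 - ρ ^ 2)) ^ 2) =
      sqrt (2 * π) * (σ₁ * sqrt (1 - ρ ^ 2)) := by
    rw [sqrt_mul (by positivity), sqrt_sq (by positivity)]
  unfold biGauss gauss1
  rw [e₀, e₁, mul_mul_mul_comm, ← exp_add, ← mul_inv]
  congr 2
  · linear_combination (-σ₀ * σ₁ * sqrt (1 - ρ ^ 2)) * h2π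
  · field_simp
    rw [hr2]
    ring

lemma integral_biGauss_prodMk_left (hσ₀ : 0 < σ₀) (hσ₁ : 0 < σ₁) (hρ : ρ ^ 2 < 1) (x₀ : ℝ) :
    ∫ x₁, biGauss μ₀ μ₁ σ₀ σ₁ ρ (x₀, x₁) = gauss1 μ₀ σ₀ x₀ := by
  have hr : 0 < sqrt (1 - ρ ^ 2) := sqrt_pos.2 (by linarith)
  simp_rw [biGauss_eq_gauss1_mul_gauss1 μ₀ μ₁ hσ₀ hσ₁ hρ]
  rw [integral_const_mul, integral_gauss1 _ (by positivity), mul_one]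

lemma integral_biGauss_prodMk_right (hσ₀ : 0 < σ₀) (hσ₁ : 0 < σ₁) (hρ : ρ ^ 2 < 1) (x₁ : ℝ) :
    ∫ x₀, biGauss μ₀ μ₁ σ₀ σ₁ ρ (x₀, x₁) = gauss1 μ₁ σ₁ x₁ := by
  simp_rw [biGauss_apply_swap μ₀ μ₁ σ₀ σ₁ ρ (_, x₁)]
  exact integral_biGauss_prodMk_left μ₁ μ₀ hσ₁ hσ₀ hρ x₁

lemma biGauss_le_mul_exp_mul_exp (hσ₀ : 0 < σ₀) (hσ₁ : 0 < σ₁) (hρ : ρ ^ 2 < 1) (x : ℝ × ℝ) :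
    biGauss μ₀ μ₁ σ₀ σ₁ ρ x ≤ (2 * π * σ₀ * σ₁ * sqrt (1 - ρ ^ 2))⁻¹ *
      (exp (-(2 * (1 + |ρ|) * σ₀ ^ 2)⁻¹ * (x.1 - μ₀) ^ 2) *
        exp (-(2 * (1 + |ρ|) * σ₁ ^ 2)⁻¹ * (x.2 - μ₁) ^ 2)) := by
  have h1 : 0 < 1 - ρ ^ 2 := by linarith
  have : 0 < sqrt (1 - ρ ^ 2) := sqrt_pos.2 h1
  unfold biGauss
  gcongr
  rw [← exp_add]
  gcongr
  set u := (x.1 - μ₀) / σ₀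
  set v := (x.2 - μ₁) / σ₁
  have hcross : 2 * ρ * u * v ≤ |ρ| * (u ^ 2 + v ^ 2) := by
    rcases abs_cases ρ with ⟨h, _⟩ | ⟨h, _⟩ <;> rw [h] <;>
      nlinarith [sq_nonneg (u - v), sq_nonneg (u + v)]
  have hu : (x.1 - μ₀) ^ 2 = σ₀ ^ 2 * u ^ 2 := by simp only [u]; field_simp
  have hv : (x.2 - μ₁) ^ 2 = σ₁ ^ 2 * v ^ 2 := by simp only [v]; field_simp
  have huv : 2 * ρ * (x.1 - μ₀) * (x.2 - μ₁) / (σ₀ * σ₁) = 2 * ρ * u * v := by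
    simp only [u, v]; field_simp
  rw [hu, hv, huv, div_le_iff₀ (by positivity)]
  calc _ = -(u ^ 2 + v ^ 2) + 2 * ρ * u * v := by field_simp; ring
    _ ≤ -(1 - |ρ|) * (u ^ 2 + v ^ 2) := by linarith
    _ = _ := by rw [← sq_abs ρ]; field_simp; ring

lemma integrable_one_add_sq_add_sq_mul_biGauss (hσ₀ : 0 < σ₀) (hσ₁ : 0 < σ₁) (hρ : ρ ^ 2 < 1) :
    Integrable fun x : ℝ × ℝ => (1 + x.1 ^ 2 + x.2 ^ 2) * biGauss μ₀ μ₁ σ₀ σ₁ ρ x := by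
  set b₀ := (2 * (1 + |ρ|) * σ₀ ^ 2)⁻¹
  set b₁ := (2 * (1 + |ρ|) * σ₁ ^ 2)⁻¹
  have hdom : Integrable fun x : ℝ × ℝ => (2 * π * σ₀ * σ₁ * sqrt (1 - ρ ^ 2))⁻¹ *
      (((1 + x.1 ^ 2) * exp (-b₀ * (x.1 - μ₀) ^ 2)) *
        ((1 + x.2 ^ 2) * exp (-b₁ * (x.2 - μ₁) ^ 2))) :=
    ((integrable_one_add_sq_mul_exp_neg_mul_sq_sub (by positivity) μ₀).mul_prod
      (integrable_one_add_sq_mul_exp_neg_mul_sq_sub (by positivity) μ₁)).const_mul _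
  refine hdom.mono' (by fun_prop) (ae_of_all _ fun x => ?_)
  have hq := biGauss_pos μ₀ μ₁ hσ₀ hσ₁ hρ x
  rw [norm_of_nonneg (by positivity)]
  calc (1 + x.1 ^ 2 + x.2 ^ 2) * biGauss μ₀ μ₁ σ₀ σ₁ ρ x
      ≤ ((1 + x.1 ^ 2) * (1 + x.2 ^ 2)) * ((2 * π * σ₀ * σ₁ * sqrt (1 - ρ ^ 2))⁻¹ *
          (exp (-b₀ * (x.1 - μ₀) ^ 2) * exp (-b₁ * (x.2 - μ₁) ^ 2))) := by
        gcongr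
        · nlinarith [mul_nonneg (sq_nonneg x.1) (sq_nonneg x.2)]
        · exact biGauss_le_mul_exp_mul_exp μ₀ μ₁ hσ₀ hσ₁ hρ x
    _ = _ := by ring

lemma integrable_biGauss (hσ₀ : 0 < σ₀) (hσ₁ : 0 < σ₁) (hρ : ρ ^ 2 < 1) :
    Integrable (biGauss μ₀ μ₁ σ₀ σ₁ ρ) := by
  refine (integrable_one_add_sq_add_sq_mul_biGauss μ₀ μ₁ hσ₀ hσ₁ hρ).mono' (by fun_prop)
    (ae_of_all _ fun x => ?_)
  have hq := biGauss_pos μ₀ μ₁ hσ₀ hσ₁ hρ x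
  rw [norm_of_nonneg hq.le]
  exact le_mul_of_one_le_left hq.le (by nlinarith [sq_nonneg x.1, sq_nonneg x.2])

lemma integral_biGauss (hσ₀ : 0 < σ₀) (hσ₁ : 0 < σ₁) (hρ : ρ ^ 2 < 1) :
    ∫ x, biGauss μ₀ μ₁ σ₀ σ₁ ρ x = 1 := by
  rw [Measure.volume_eq_prod, integral_prod _ (integrable_biGauss μ₀ μ₁ hσ₀ hσ₁ hρ)]
  simp_rw [integral_biGauss_prodMk_left μ₀ μ₁ hσ₀ hσ₁ hρ]
  exact integral_gauss1 μ₀ hσ₀.ne'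

end BivariateGaussian

lemma exists_log_biGauss_eq_add_sub_sq (μ₀ μ₁ : ℝ) {σ₀ σ₁ ρ ε : ℝ} (hσ₀ : 0 < σ₀) (hσ₁ : 0 < σ₁)
    (hρ : ρ ^ 2 < 1) (hrel : ρ * ε = σ₀ * σ₁ * (1 - ρ ^ 2)) :
    ∃ a₀ b₀ c₀ a₁ b₁ c₁ : ℝ, ∀ x : ℝ × ℝ, log (biGauss μ₀ μ₁ σ₀ σ₁ ρ x) =
      (a₀ * x.1 ^ 2 + b₀ * x.1 + c₀) + (a₁ * x.2 ^ 2 + b₁ * x.2 + c₁) -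
        (x.1 - x.2) ^ 2 / (2 * ε) := by
  have h1 : 0 < 1 - ρ ^ 2 := by linarith
  have hε : ε ≠ 0 := by
    rintro rfl
    have : 0 < σ₀ * σ₁ * (1 - ρ ^ 2) := by positivity
    linarith
  set s₀ := σ₀ ^ 2 * (1 - ρ ^ 2)
  set s₁ := σ₁ ^ 2 * (1 - ρ ^ 2)
  refine ⟨1 / (2 * ε) - 1 / (2 * s₀), μ₀ / s₀ - μ₁ / ε,
    μ₀ * μ₁ / ε - μ₀ ^ 2 / (2 * s₀) - log (2 * π * σ₀ * σ₁ * sqrt (1 - ρ ^ 2)),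
    1 / (2 * ε) - 1 / (2 * s₁), μ₁ / s₁ - μ₀ / ε, -μ₁ ^ 2 / (2 * s₁), fun x => ?_⟩
  rw [log_biGauss μ₀ μ₁ hσ₀ hσ₁ hρ]
  linear_combination (norm := skip) ((x.1 - μ₀) * (x.2 - μ₁) / (σ₀ * σ₁ * (1 - ρ ^ 2) * ε)) * hrel
  simp only [s₀, s₁]
  field_simp
  ring

lemma rhoStar_sq_lt_one_and_mul_eq {s ε ρ : ℝ} (hs : 0 < s) (hε : 0 < ε)
    (hρ : ρ = (sqrt (s ^ 2 + ε ^ 2 / 4) - ε / 2) / s) :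
    ρ ^ 2 < 1 ∧ ρ * ε = s * (1 - ρ ^ 2) := by
  have hS : sqrt (s ^ 2 + ε ^ 2 / 4) ^ 2 = s ^ 2 + ε ^ 2 / 4 := sq_sqrt (by positivity)
  have hρs : ρ * s + ε / 2 = sqrt (s ^ 2 + ε ^ 2 / 4) := by
    rw [hρ, div_mul_cancel₀ _ hs.ne', sub_add_cancel]
  have hρ0 : 0 < ρ := by
    have : ε / 2 < sqrt (s ^ 2 + ε ^ 2 / 4) :=
      lt_sqrt_of_sq_lt (by nlinarith)
    nlinarith
  have hrel : ρ * ε = s * (1 - ρ ^ 2) := by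
    refine mul_left_cancel₀ hs.ne' ?_
    linear_combination hS + (ρ * s + ε / 2 + sqrt (s ^ 2 + ε ^ 2 / 4)) * hρs
  refine ⟨?_, hrel⟩
  nlinarith [mul_pos hρ0 hε]

lemma abs_quadratic_le (a b c t : ℝ) :
    |a * t ^ 2 + b * t + c| ≤ (|a| + |b| + |c|) * (1 + t ^ 2) := by
  have ht : |t| ≤ 1 + t ^ 2 := by nlinarith [sq_abs t, sq_nonneg (|t| - 1)]
  calc |a * t ^ 2 + b * t + c| ≤ |a| * t ^ 2 + |b| * |t| + |c| := by
        have := abs_add_three (a * t ^ 2) (b * t) c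
        rwa [abs_mul, abs_mul, abs_of_nonneg (sq_nonneg t)] at this
    _ ≤ (|a| + |b| + |c|) * (1 + t ^ 2) := by
        nlinarith [abs_nonneg a, abs_nonneg b, abs_nonneg c, sq_nonneg t,
          mul_le_mul_of_nonneg_left ht (abs_nonneg b)]

lemma MeasureTheory.Integrable.mul_of_abs_le_mul {α : Type*} [MeasurableSpace α] {μ : Measure α}
    {f p w : α → ℝ} {K : ℝ} (hw : Integrable (fun x => w x * p x) μ)
    (hf : AEStronglyMeasurable f μ) (hp : AEStronglyMeasurable p μ) (hp0 : ∀ x, 0 ≤ p x)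
    (hfw : ∀ x, |f x| ≤ K * w x) : Integrable (fun x => f x * p x) μ :=
  (hw.const_mul K).mono' (hf.mul hp) (ae_of_all _ fun x => by
    rw [norm_mul, norm_of_nonneg (hp0 x), Real.norm_eq_abs, ← mul_assoc]
    exact mul_le_mul_of_nonneg_right (hfw x) (hp0 x))

section SecondMoments

variable {p : ℝ × ℝ → ℝ}

lemma integrable_quadratic_fst_mul (hp : Integrable fun x : ℝ × ℝ => (1 + x.1 ^ 2 + x.2 ^ 2) * p x)
    (hpm : AEStronglyMeasurable p) (hp0 : ∀ x, 0 ≤ p x) (a b c : ℝ) :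
    Integrable fun x : ℝ × ℝ => (a * x.1 ^ 2 + b * x.1 + c) * p x :=
  hp.mul_of_abs_le_mul (by fun_prop) hpm hp0 fun x => (abs_quadratic_le a b c x.1).trans
    (mul_le_mul_of_nonneg_left (by nlinarith [sq_nonneg x.2]) (by positivity))

lemma integrable_quadratic_snd_mul (hp : Integrable fun x : ℝ × ℝ => (1 + x.1 ^ 2 + x.2 ^ 2) * p x)
    (hpm : AEStronglyMeasurable p) (hp0 : ∀ x, 0 ≤ p x) (a b c : ℝ) :
    Integrable fun x : ℝ × ℝ => (a * x.2 ^ 2 + b * x.2 + c) * p x :=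
  hp.mul_of_abs_le_mul (by fun_prop) hpm hp0 fun x => (abs_quadratic_le a b c x.2).trans
    (mul_le_mul_of_nonneg_left (by nlinarith [sq_nonneg x.1]) (by positivity))

lemma integrable_sq_sub_div_mul {ε : ℝ} (hε : 0 < ε)
    (hp : Integrable fun x : ℝ × ℝ => (1 + x.1 ^ 2 + x.2 ^ 2) * p x)
    (hpm : AEStronglyMeasurable p) (hp0 : ∀ x, 0 ≤ p x) :
    Integrable fun x : ℝ × ℝ => (x.1 - x.2) ^ 2 / (2 * ε) * p x := by
  refine hp.mul_of_abs_le_mul (K := ε⁻¹) (by fun_prop) hpm hp0 fun x => ?_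
  rw [abs_of_nonneg (by positivity), div_le_iff₀ (by positivity)]
  field_simp
  nlinarith [sq_nonneg (x.1 + x.2)]

end SecondMoments

lemma integral_comp_fst_mul_eq_of_ae_eq_marginal {α β : Type*} [MeasurableSpace α]
    [MeasurableSpace β] {μ : Measure α} {ν : Measure β} [SFinite μ] [SFinite ν]
    {φ : α → ℝ} {p q : α × β → ℝ}
    (hp : Integrable (fun x => φ x.1 * p x) (μ.prod ν))
    (hq : Integrable (fun x => φ x.1 * q x) (μ.prod ν))
    (h : ∀ᵐ a ∂μ, ∫ b, p (a, b) ∂ν = ∫ b, q (a, b) ∂ν) :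
    ∫ x, φ x.1 * p x ∂(μ.prod ν) = ∫ x, φ x.1 * q x ∂(μ.prod ν) := by
  rw [integral_prod _ hp, integral_prod _ hq]
  refine integral_congr_ae (h.mono fun a ha => ?_)
  simp only [integral_const_mul, ha]

lemma integral_comp_snd_mul_eq_of_ae_eq_marginal {α β : Type*} [MeasurableSpace α]
    [MeasurableSpace β] {μ : Measure α} {ν : Measure β} [SFinite μ] [SFinite ν]
    {φ : β → ℝ} {p q : α × β → ℝ}
    (hp : Integrable (fun x => φ x.2 * p x) (μ.prod ν))
    (hq : Integrable (fun x => φ x.2 * q x) (μ.prod ν))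
    (h : ∀ᵐ b ∂ν, ∫ a, p (a, b) ∂μ = ∫ a, q (a, b) ∂μ) :
    ∫ x, φ x.2 * p x ∂(μ.prod ν) = ∫ x, φ x.2 * q x ∂(μ.prod ν) := by
  rw [integral_prod_symm _ hp, integral_prod_symm _ hq]
  refine integral_congr_ae (h.mono fun b hb => ?_)
  simp only [integral_const_mul, hb]

open InformationTheory in
theorem integral_mul_log_lt_integral_mul_log {α : Type*} [MeasurableSpace α] {μ : Measure α}
    {p q : α → ℝ} (hp0 : ∀ x, 0 ≤ p x) (hq0 : ∀ x, 0 < q x) (hp : Integrable p μ)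
    (hq : Integrable q μ) (hpq : ∫ x, p x ∂μ = ∫ x, q x ∂μ)
    (hplogp : Integrable (fun x => p x * log (p x)) μ)
    (hplogq : Integrable (fun x => p x * log (q x)) μ) (hne : ¬ p =ᵐ[μ] q) :
    ∫ x, p x * log (q x) ∂μ < ∫ x, p x * log (p x) ∂μ := by
  have hkl : ∀ x, q x * klFun (p x / q x) =
      p x * log (p x) - p x * log (q x) - p x + q x := by
    intro x
    have hq := (hq0 x).ne'
    rcases (hp0 x).eq_or_lt with h | h
    · simp [← h, klFun]
    · rw [klFun, log_div h.ne' hq]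
      field_simp
      ring
  have h₁ : Integrable (fun x => p x * log (p x) - p x * log (q x)) μ := hplogp.sub hplogq
  have h₂ : Integrable (fun x => p x * log (p x) - p x * log (q x) - p x) μ := h₁.sub hp
  have hint : Integrable (fun x => p x * log (p x) - p x * log (q x) - p x + q x) μ := h₂.add hq
  have hnn : 0 ≤ fun x => p x * log (p x) - p x * log (q x) - p x + q x := fun x => by
    dsimp only [Pi.zero_apply]
    rw [← hkl x]
    exact mul_nonneg (hq0 x).le (klFun_nonneg (div_nonneg (hp0 x) (hq0 x).le))
  have hpos : 0 < ∫ x, p x * log (p x) - p x * log (q x) - p x + q x ∂μ := by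
    refine (integral_nonneg hnn).lt_of_ne fun h => hne ?_
    filter_upwards [(integral_eq_zero_iff_of_nonneg hnn hint).1 h.symm] with x hx
    rw [Pi.zero_apply, ← hkl x] at hx
    have := (klFun_eq_zero_iff (div_nonneg (hp0 x) (hq0 x).le)).1
      ((mul_eq_zero.1 hx).resolve_left (hq0 x).ne')
    exact (div_eq_one_iff_eq (hq0 x).ne').1 this
  rw [integral_add h₂ hq, integral_sub h₁ hp, integral_sub hplogp hplogq, hpq] at hpos
  linarith

noncomputable def sbObjective (c p : ℝ × ℝ → ℝ) : ℝ :=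
  (∫ x, c x * p x) - diffEntropy2 p

theorem sbObjective_lt_of_log_eq {c p q : ℝ × ℝ → ℝ} {f g : ℝ → ℝ}
    (hp0 : ∀ x, 0 ≤ p x) (hq0 : ∀ x, 0 < q x) (hlog : ∀ x, log (q x) = f x.1 + g x.2 - c x)
    (hp : Integrable p) (hq : Integrable q)
    (hmarg₀ : ∀ᵐ t, ∫ s, p (t, s) = ∫ s, q (t, s))
    (hmarg₁ : ∀ᵐ t, ∫ s, p (s, t) = ∫ s, q (s, t))
    (hfp : Integrable fun x => f x.1 * p x) (hfq : Integrable fun x => f x.1 * q x)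
    (hgp : Integrable fun x => g x.2 * p x) (hgq : Integrable fun x => g x.2 * q x)
    (hcp : Integrable fun x => c x * p x) (hcq : Integrable fun x => c x * q x)
    (hplogp : Integrable fun x => p x * log (p x)) (hne : ¬ p =ᵐ[volume] q) :
    sbObjective c q < sbObjective c p := by
  have hlog_mul : ∀ r : ℝ × ℝ → ℝ, Integrable (fun x => f x.1 * r x) →
      Integrable (fun x => g x.2 * r x) → Integrable (fun x => c x * r x) →
      Integrable (fun x => r x * log (q x)) ∧
        ∫ x, r x * log (q x) = (∫ x, f x.1 * r x) + (∫ x, g x.2 * r x) - ∫ x, c x * r x := by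
    intro r hf hg hc
    have : (fun x => r x * log (q x)) = fun x => f x.1 * r x + g x.2 * r x - c x * r x :=
      funext fun x => by rw [hlog]; ring
    have hfg : Integrable (fun x => f x.1 * r x + g x.2 * r x) := hf.add hg
    rw [this, integral_sub hfg hc, integral_add hf hg]
    exact ⟨hfg.sub hc, rfl⟩
  obtain ⟨hplogq, hp_eq⟩ := hlog_mul p hfp hgp hcp
  obtain ⟨-, hq_eq⟩ := hlog_mul q hfq hgq hcq
  have hf : ∫ x, f x.1 * p x = ∫ x, f x.1 * q x :=
    integral_comp_fst_mul_eq_of_ae_eq_marginal hfp hfq hmarg₀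
  have hg : ∫ x, g x.2 * p x = ∫ x, g x.2 * q x :=
    integral_comp_snd_mul_eq_of_ae_eq_marginal hgp hgq hmarg₁
  have hpq : ∫ x, 1 * p x = ∫ x, 1 * q x :=
    integral_comp_fst_mul_eq_of_ae_eq_marginal (φ := fun _ => 1) (hp.const_mul 1)
      (hq.const_mul 1) hmarg₀
  simp only [one_mul] at hpq
  have hgibbs := integral_mul_log_lt_integral_mul_log hp0 hq0 hp hq hpq hplogp hplogq hne
  unfold sbObjective diffEntropy2
  linarith

/-- Let `ε > 0` and `ρ* = (√(σ₀²σ₁² + ε²/4) - ε/2)/(σ₀σ₁)`. The bivariate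
Gaussian density with means `(μ₀, μ₁)`, variances `σ₀², σ₁²` and correlation `ρ*` is the
unique minimizer of the static Schrödinger Bridge (entropic OT) objective
`q' ↦ ∫ (x₀-x₁)²/(2ε) q' - H(q')` over all probability densities on `ℝ²` with marginals
`N(μ₀, σ₀²)`, `N(μ₁, σ₁²)`, finite second moments and finite differential entropy: any
such `q'` differing from it on a set of positive Lebesgue measure has strictly larger
objective value. -/
theorem biGauss_rhoStar_unique_SB_minimizer (μ₀ μ₁ σ₀ σ₁ ε ρstar : ℝ)
    (hσ₀ : 0 < σ₀) (hσ₁ : 0 < σ₁) (hε : 0 < ε)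
    (hρstar : ρstar = (Real.sqrt (σ₀ ^ 2 * σ₁ ^ 2 + ε ^ 2 / 4) - ε / 2) / (σ₀ * σ₁))
    (q' : ℝ × ℝ → ℝ)
    (hq'meas : Measurable q')
    (hq'nonneg : ∀ x, 0 ≤ q' x)
    (hq'prob : ∫ x : ℝ × ℝ, q' x = 1)
    (hmarg0 : ∀ᵐ x₀ ∂(volume : Measure ℝ), (∫ x₁ : ℝ, q' (x₀, x₁)) = gauss1 μ₀ σ₀ x₀)
    (hmarg1 : ∀ᵐ x₁ ∂(volume : Measure ℝ), (∫ x₀ : ℝ, q' (x₀, x₁)) = gauss1 μ₁ σ₁ x₁)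
    (hmom : Integrable (fun x : ℝ × ℝ => (x.1 ^ 2 + x.2 ^ 2) * q' x))
    (hent : Integrable (fun x : ℝ × ℝ => q' x * Real.log (q' x)))
    (hne : ¬ (q' =ᵐ[(volume : Measure (ℝ × ℝ))] biGauss μ₀ μ₁ σ₀ σ₁ ρstar)) :
    (∫ x : ℝ × ℝ, (x.1 - x.2) ^ 2 / (2 * ε) * biGauss μ₀ μ₁ σ₀ σ₁ ρstar x) -
        diffEntropy2 (biGauss μ₀ μ₁ σ₀ σ₁ ρstar) <
      (∫ x : ℝ × ℝ, (x.1 - x.2) ^ 2 / (2 * ε) * q' x) - diffEntropy2 q' := by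
  obtain ⟨hρ, hrel⟩ := rhoStar_sq_lt_one_and_mul_eq (ρ := ρstar) (mul_pos hσ₀ hσ₁) hε
    (by rw [hρstar, mul_pow])
  obtain ⟨a₀, b₀, c₀, a₁, b₁, c₁, hlog⟩ := exists_log_biGauss_eq_add_sub_sq μ₀ μ₁ hσ₀ hσ₁ hρ hrel
  have hq'int : Integrable q' := .of_integral_ne_zero (by rw [hq'prob]; exact one_ne_zero)
  have hq'w : Integrable fun x : ℝ × ℝ => (1 + x.1 ^ 2 + x.2 ^ 2) * q' x :=
    (hq'int.add hmom).congr (ae_of_all _ fun x => by simp only [Pi.add_apply]; ring)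
  have hqw := integrable_one_add_sq_add_sq_mul_biGauss μ₀ μ₁ hσ₀ hσ₁ hρ
  have hq0 := biGauss_pos μ₀ μ₁ hσ₀ hσ₁ hρ
  have hqm : AEStronglyMeasurable (biGauss μ₀ μ₁ σ₀ σ₁ ρstar) := by fun_prop
  have hq'm : AEStronglyMeasurable q' := hq'meas.aestronglyMeasurable
  exact sbObjective_lt_of_log_eq (f := fun t => a₀ * t ^ 2 + b₀ * t + c₀)
    (g := fun t => a₁ * t ^ 2 + b₁ * t + c₁) (c := fun x => (x.1 - x.2) ^ 2 / (2 * ε))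
    hq'nonneg hq0 hlog hq'int (integrable_biGauss μ₀ μ₁ hσ₀ hσ₁ hρ)
    (hmarg0.mono fun t ht => ht.trans (integral_biGauss_prodMk_left μ₀ μ₁ hσ₀ hσ₁ hρ t).symm)
    (hmarg1.mono fun t ht => ht.trans (integral_biGauss_prodMk_right μ₀ μ₁ hσ₀ hσ₁ hρ t).symm)
    (integrable_quadratic_fst_mul hq'w hq'm hq'nonneg _ _ _)
    (integrable_quadratic_fst_mul hqw hqm (fun x => (hq0 x).le) _ _ _)
    (integrable_quadratic_snd_mul hq'w hq'm hq'nonneg _ _ _)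
    (integrable_quadratic_snd_mul hqw hqm (fun x => (hq0 x).le) _ _ _)
    (integrable_sq_sub_div_mul hε hq'w hq'm hq'nonneg)
    (integrable_sq_sub_div_mul hε hqw hqm fun x => (hq0 x).le) hent hne
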